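/- The fixed subring of Γ², namely {x ∈ L : Γ(Γ(x)) = x}, equals the subring of L generated by R together with T² and T⁻², i.e. the set of Laurent polynomials over R supported in even powers of T. (This is the statement E_*^{C₂} ≅ W⟦μ₀⟧[Σ₂,₀^{±1}].) -/

import Mathlib

/- Setup: `k` a perfect field of characteristic 2, `𝕎 = W(k)` the 2-typical Witt
vectors, `R = 𝕎⟦X⟧` the formal power series ring, `μ₁ = (2 - X)(1 - X)⁻¹` and
`μ = X + μ₁` (modelling `π₀E` with `μ₀ = X`). -/

noncomputable section

open scoped PowerSeries

instance : Fact (Nat.Prime 2) := ⟨Nat.prime_two⟩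

variable (k : Type) [Field k] [CharP k 2] [PerfectField k]

local notation "𝕎" => WittVector 2 k

/-- `μ₁ = γ(μ₀) = (2 - X)·(1 - X)⁻¹`. -/
def μ₁ : 𝕎⟦X⟧ := (2 - PowerSeries.X) * Ring.inverse (1 - PowerSeries.X)

/-- `μ = μ₀ + μ₁`. -/
def μ : 𝕎⟦X⟧ := PowerSeries.X + μ₁ k

/- `L = R[T, T⁻¹]` models `E_* = W⟦μ₀⟧[r₁,₀^{±1}]` with `r₁,₀ = T`. -/
local notation "L" => LaurentPolynomial (𝕎⟦X⟧)

/-!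
Since `μ - 2 = φ(Y)` is fixed by `γ` and `γ(X) = μ₁`, `γ` swaps `X` and `μ₁ = μ - X`, so
`γ²` fixes `W` and `X` and is therefore the identity of `W⟦X⟧`. As `(1 - X)(1 - μ₁) = -1`,
this gives `Γ²(T) = -T`, so `Γ²` multiplies the coefficient of `Tⁿ` by `(-1)ⁿ`. Because `2` is
a non-zero-divisor of `W⟦X⟧`, the fixed points of `Γ²` are exactly the Laurent polynomials in
even powers of `T`.
-/

namespace PowerSeries

variable {R : Type*} [CommSemiring R]

/-- No continuity is needed: writing `f = X ^ (n + 1) * g + trunc (n + 1) f`, the map `σ` fixes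
the polynomial part and keeps the first summand divisible by `X ^ (n + 1)`. -/
theorem ringHom_eq_id_of_map_C_of_map_X {σ : R⟦X⟧ →+* R⟦X⟧} (hC : ∀ a, σ (C a) = C a)
    (hX : σ X = X) : σ = RingHom.id _ := by
  have hpoly : σ.comp Polynomial.coeToPowerSeries.ringHom = Polynomial.coeToPowerSeries.ringHom :=
    Polynomial.ringHom_ext (by simpa using hC) (by simpa using hX)
  have hcoeff (g : R⟦X⟧) (p : Polynomial R) (n : ℕ) :
      coeff n (X ^ (n + 1) * g + (p : R⟦X⟧)) = p.coeff n := by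
    simp [coeff_X_pow_mul']
  ext f n
  have hpoly' : σ (trunc (n + 1) f : R⟦X⟧) = trunc (n + 1) f := congr($hpoly (trunc (n + 1) f))
  rw [RingHom.id_apply, eq_X_pow_mul_shift_add_trunc (n + 1) f, map_add, map_mul, map_pow, hX,
    hpoly', hcoeff, hcoeff]

end PowerSeries

namespace LaurentPolynomial

variable {R : Type*} [CommRing R]

theorem T_mem_of_even {S : Subring R[T;T⁻¹]} (hT₂ : T 2 ∈ S) (hTneg : T (-2) ∈ S) {n : ℤ}
    (hn : Even n) : T n ∈ S := by
  obtain ⟨m, rfl⟩ := hn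
  induction m using Int.induction_on with
  | zero => simp [T_zero]
  | succ m ih =>
    rw [show (m : ℤ) + 1 + (m + 1) = m + m + 2 by ring, T_add]
    exact S.mul_mem ih hT₂
  | pred m ih =>
    rw [show -(m : ℤ) - 1 + (-m - 1) = -m + -m + -2 by ring, T_add]
    exact S.mul_mem ih hTneg

theorem mem_closure_of_coeff_odd_eq_zero {p : R[T;T⁻¹]} (hp : ∀ n, Odd n → p.coeff n = 0) :
    p ∈ Subring.closure (Set.range C ∪ {T 2, T (-2)}) := by
  rw [← AddMonoidAlgebra.sum_coeff_single p]
  refine AddSubmonoidClass.finsuppSum_mem _ _ _ fun n hn => ?_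
  have hn : Even n := by
    by_contra hodd
    exact hn (hp n (Int.not_even_iff_odd.mp hodd))
  rw [single_eq_C_mul_T]
  exact Subring.mul_mem _ (Subring.subset_closure (.inl ⟨_, rfl⟩))
    (T_mem_of_even (Subring.subset_closure (.inr (.inl rfl)))
      (Subring.subset_closure (.inr (.inr rfl))) hn)

section SignInvolution

variable {Ψ : R[T;T⁻¹] →+* R[T;T⁻¹]} (hC : ∀ r, Ψ (C r) = C r) (hT : Ψ (T 1) = -T 1)
include hT

theorem map_T_neg_one_of_map_T_one_eq_neg : Ψ (T (-1)) = -T (-1) :=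
  calc Ψ (T (-1)) = Ψ (T (-1)) * (Ψ (T 1) * -T (-1)) := by
        rw [hT, neg_mul_neg, ← T_add, add_neg_cancel, T_zero, mul_one]
    _ = -T (-1) := by
        rw [← mul_assoc, ← map_mul, ← T_add, neg_add_cancel, T_zero, map_one, one_mul]

theorem map_T_of_map_T_one_eq_neg (n : ℤ) : Ψ (T n) = n.negOnePow • T n := by
  induction n using Int.induction_on with
  | zero => rw [T_zero, map_one, Int.negOnePow_zero, one_smul]
  | succ m ih =>
    rw [T_add, map_mul, ih, hT, smul_mul_assoc, mul_neg, ← T_add, Int.negOnePow_succ,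
      Units.neg_smul, smul_neg]
  | pred m ih =>
    rw [T_sub, map_mul, ih, map_T_neg_one_of_map_T_one_eq_neg hT, smul_mul_assoc, mul_neg,
      ← T_add, ← sub_eq_add_neg, Int.negOnePow_sub, Int.negOnePow_one, mul_neg, mul_one,
      Units.neg_smul, smul_neg]

include hC

theorem coeff_map_of_map_T_one_eq_neg (p : R[T;T⁻¹]) (n : ℤ) :
    (Ψ p).coeff n = n.negOnePow • p.coeff n := by
  induction p using LaurentPolynomial.induction_on' with
  | add p q hp hq => rw [map_add, AddMonoidAlgebra.coeff_add, AddMonoidAlgebra.coeff_add,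
      Finsupp.add_apply, Finsupp.add_apply, hp, hq, smul_add]
  | C_mul_T m a =>
    rw [map_mul, hC, map_T_of_map_T_one_eq_neg hT, mul_smul_comm, AddMonoidAlgebra.coeff_smul,
      Finsupp.smul_apply, ← single_eq_C_mul_T, AddMonoidAlgebra.coeff_single]
    rcases eq_or_ne m n with rfl | hmn
    · rfl
    · simp [hmn]

theorem eqLocus_eq_closure_of_map_T_one_eq_neg (h2 : IsLeftRegular (2 : R)) :
    Ψ.eqLocus (RingHom.id _) = Subring.closure (Set.range C ∪ {T 2, T (-2)}) := by
  apply le_antisymm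
  · intro p hp
    refine mem_closure_of_coeff_odd_eq_zero fun n hn => h2 ?_
    have hfix : n.negOnePow • p.coeff n = p.coeff n := by
      rw [← coeff_map_of_map_T_one_eq_neg hC hT]
      exact congr($(show Ψ p = p from hp).coeff n)
    rw [Int.negOnePow_odd n hn, Units.neg_smul, one_smul, neg_eq_iff_add_eq_zero] at hfix
    show 2 * p.coeff n = 2 * 0
    rw [two_mul, hfix, mul_zero]
  · rw [Subring.closure_le]
    rintro _ (⟨r, rfl⟩ | rfl | rfl)
    · exact hC r
    · exact (map_T_of_map_T_one_eq_neg hT 2).trans (by simp [Int.negOnePow_even])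
    · exact (map_T_of_map_T_one_eq_neg hT (-2)).trans (by simp [Int.negOnePow_even])

end SignInvolution

end LaurentPolynomial

omit [CharP k 2] [PerfectField k] in
open PowerSeries in
theorem one_sub_μ₁_mul_one_sub_X : (1 - μ₁ k) * (1 - X) = -1 := by
  have hunit : (1 - X : 𝕎⟦X⟧) * Ring.inverse (1 - X) = 1 :=
    Ring.mul_inverse_cancel _ (by simp [isUnit_iff_constantCoeff])
  rw [μ₁]
  linear_combination (X - 2 : 𝕎⟦X⟧) * hunit

omit [PerfectField k] in
theorem isLeftRegular_two_powerSeries_wittVector : IsLeftRegular (2 : 𝕎⟦X⟧) := by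
  have h2 : (2 : 𝕎) ≠ 0 := by exact_mod_cast (WittVector.irreducible 2).ne_zero
  refine (IsRegular.of_ne_zero fun h => h2 ?_).left
  simpa only [map_ofNat, map_zero] using congrArg PowerSeries.constantCoeff h

theorem statement11
    (φ : 𝕎⟦X⟧ →+* 𝕎⟦X⟧)
    (hφY : φ PowerSeries.X = μ k - 2)
    (γ : 𝕎⟦X⟧ →+* 𝕎⟦X⟧)
    (hγC : ∀ a : 𝕎, γ (PowerSeries.C a) = PowerSeries.C a)
    (hγX : γ PowerSeries.X = μ₁ k)
    (hγφ : ∀ f : 𝕎⟦X⟧, γ (φ f) = φ f)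
    (Γ : L →+* L)
    (hΓC : ∀ r : 𝕎⟦X⟧, Γ (LaurentPolynomial.C r) = LaurentPolynomial.C (γ r))
    (hΓT : Γ (LaurentPolynomial.T 1) =
      LaurentPolynomial.C (1 - PowerSeries.X) * LaurentPolynomial.T 1) :
    {x : L | Γ (Γ x) = x} =
      (Subring.closure
        ((Set.range fun r : 𝕎⟦X⟧ => (LaurentPolynomial.C r : L)) ∪
          {LaurentPolynomial.T 2, LaurentPolynomial.T (-2)}) : Set L) := by
  have hγμ₁ : γ (μ₁ k) = PowerSeries.X := by
    have hγμ : γ (μ k - 2) = μ k - 2 := hφY ▸ hγφ PowerSeries.X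
    rw [μ, map_sub, map_add, hγX, map_ofNat] at hγμ
    linear_combination hγμ
  have hγγ : γ.comp γ = RingHom.id _ :=
    PowerSeries.ringHom_eq_id_of_map_C_of_map_X (by simp [hγC]) (by simp [hγX, hγμ₁])
  have hΓΓC (r : 𝕎⟦X⟧) : Γ.comp Γ (LaurentPolynomial.C r) = LaurentPolynomial.C r := by
    rw [RingHom.comp_apply, hΓC, hΓC, ← RingHom.comp_apply γ γ, hγγ, RingHom.id_apply]
  have hΓΓT : Γ.comp Γ (LaurentPolynomial.T 1) = -LaurentPolynomial.T 1 := by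
    rw [RingHom.comp_apply, hΓT, map_mul, hΓC, hΓT, map_sub, map_one, hγX, ← mul_assoc, ← map_mul,
      one_sub_μ₁_mul_one_sub_X, map_neg, map_one]
    ring
  exact congrArg SetLike.coe <| LaurentPolynomial.eqLocus_eq_closure_of_map_T_one_eq_neg
    hΓΓC hΓΓT (isLeftRegular_two_powerSeries_wittVector k)
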